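/- Let G = (V,E) be a temporal graph, s, z ∈ V, δ ∈ ℕ, and D ⊆ E. Let G* = (V, E ∪ E*) where E* = {(v,w,t,λ+δ) : (v,w,t,λ) ∈ E}, and let G*_D = (V, (E \ D) ∪ E*). Then there is a D-delayed temporal walk from s to z in G if and only if there is a temporal walk from s to z in G*_D. -/

import Mathlib

/-- A time arc of a temporal graph: start vertex, end vertex, time label, traversal time. -/
structure TimeArc (V : Type) where
  src : V
  dst : V
  time : ℕ
  trav : ℕ
deriving DecidableEq

/-- Two consecutive time arcs of a temporal walk. -/
def walkStep {V : Type} (e f : TimeArc V) : Prop :=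
  e.dst = f.src ∧ e.time + e.trav ≤ f.time

/-- `W` is a temporal walk from `s` to `z` in the temporal graph with time arc set `E`. -/
def IsTemporalWalk {V : Type} (E : Finset (TimeArc V)) (s z : V)
    (W : List (TimeArc V)) : Prop :=
  W ≠ [] ∧ (∀ e ∈ W, e ∈ E) ∧ W.Chain' walkStep ∧
    (∀ e, W.head? = some e → e.src = s) ∧
    (∀ e, W.getLast? = some e → e.dst = z)

/-- Delaying a single time arc: if it belongs to the delay set `D`, its traversal
time is increased by `δ`. -/
def delayArc {V : Type} [DecidableEq V] (D : Finset (TimeArc V)) (δ : ℕ)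
    (e : TimeArc V) : TimeArc V :=
  if e ∈ D then ⟨e.src, e.dst, e.time, e.trav + δ⟩ else e

/-- The temporal graph obtained from `E` by delaying every time arc in `D` by `δ`. -/
def delayGraph {V : Type} [DecidableEq V] (E D : Finset (TimeArc V)) (δ : ℕ) :
    Finset (TimeArc V) :=
  E.image (delayArc D δ)

/-- `E* = {(v,w,t,λ+δ) : (v,w,t,λ) ∈ E}`: every time arc of `E` delayed by `δ`. -/
def delayedCopies {V : Type} [DecidableEq V] (E : Finset (TimeArc V)) (δ : ℕ) :
    Finset (TimeArc V) :=
  E.image (fun e => ⟨e.src, e.dst, e.time, e.trav + δ⟩)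

/-! Lowering traversal times can only help: a walk stays a walk when each of its arcs is
replaced by an arc with the same endpoints and time label and a traversal time that is no
larger. Every arc of `delayGraph E D δ` already lies in `(E \ D) ∪ E*`, and conversely every
arc of `(E \ D) ∪ E*` is matched in this way by an arc of `delayGraph E D δ`: an arc of `E \ D`
by itself, and a copy `e + δ` by `delayArc D δ e`, which is `e + δ` or `e`. -/

namespace TimeArc

variable {V : Type}

structure NoSlowerThan (e f : TimeArc V) : Prop where
  src_eq : e.src = f.src
  dst_eq : e.dst = f.dst
  time_eq : e.time = f.time
  trav_le : e.trav ≤ f.trav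

theorem NoSlowerThan.refl (e : TimeArc V) : e.NoSlowerThan e := ⟨rfl, rfl, rfl, le_rfl⟩

end TimeArc

open TimeArc

variable {V : Type}

theorem walkStep.of_noSlowerThan {e f e' f' : TimeArc V} (h : walkStep e f)
    (he : e'.NoSlowerThan e) (hf : f'.NoSlowerThan f) : walkStep e' f' :=
  ⟨he.dst_eq.trans (h.1.trans hf.src_eq.symm), by
    rw [he.time_eq, hf.time_eq]; exact (Nat.add_le_add_left he.trav_le _).trans h.2⟩

theorem IsTemporalWalk.map_noSlowerThan {F F' : Finset (TimeArc V)} {s z : V}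
    {W : List (TimeArc V)} (hW : IsTemporalWalk F' s z W) (g : TimeArc V → TimeArc V)
    (hg : ∀ e, (g e).NoSlowerThan e) (hgF : ∀ e ∈ F', g e ∈ F) :
    IsTemporalWalk F s z (W.map g) := by
  obtain ⟨hne, hmem, hchain, hhead, hlast⟩ := hW
  refine ⟨by simpa using hne, ?_, ?_, ?_, ?_⟩
  · simpa using fun e he => hgF e (hmem e he)
  · exact List.isChain_map_of_isChain g (fun e f h => h.of_noSlowerThan (hg e) (hg f)) hchain
  · simp only [List.head?_map, Option.map_eq_some_iff]
    rintro _ ⟨e, he, rfl⟩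
    exact (hg e).src_eq.trans (hhead e he)
  · simp only [List.getLast?_map, Option.map_eq_some_iff]
    rintro _ ⟨e, he, rfl⟩
    exact (hg e).dst_eq.trans (hlast e he)

theorem exists_temporalWalk_of_forall_exists_noSlowerThan {F F' : Finset (TimeArc V)} {s z : V}
    (h : ∀ e ∈ F', ∃ e' ∈ F, e'.NoSlowerThan e) (hW : ∃ W, IsTemporalWalk F' s z W) :
    ∃ W, IsTemporalWalk F s z W := by
  classical
  obtain ⟨W, hW⟩ := hW
  let g : TimeArc V → TimeArc V := fun e =>
    if he : ∃ e' ∈ F, e'.NoSlowerThan e then he.choose else e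
  have hg : ∀ e, (g e).NoSlowerThan e := fun e => by
    by_cases he : ∃ e' ∈ F, e'.NoSlowerThan e
    · simpa only [g, dif_pos he] using he.choose_spec.2
    · simpa only [g, dif_neg he] using NoSlowerThan.refl e
  have hgF : ∀ e ∈ F', g e ∈ F := fun e he => by
    have hex := h e he
    simpa only [g, dif_pos hex] using hex.choose_spec.1
  exact ⟨_, hW.map_noSlowerThan g hg hgF⟩

variable [DecidableEq V]

theorem delayGraph_subset_sdiff_union_delayedCopies (E D : Finset (TimeArc V)) (δ : ℕ) :
    delayGraph E D δ ⊆ (E \ D) ∪ delayedCopies E δ := by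
  intro e he
  obtain ⟨a, ha, rfl⟩ := Finset.mem_image.mp he
  by_cases hd : a ∈ D
  · exact Finset.mem_union_right _ (Finset.mem_image.mpr ⟨a, ha, by simp [delayArc, hd]⟩)
  · exact Finset.mem_union_left _ (by simpa [delayArc, hd] using And.intro ha hd)

theorem exists_noSlowerThan_mem_delayGraph {E D : Finset (TimeArc V)} {δ : ℕ} {e : TimeArc V}
    (he : e ∈ (E \ D) ∪ delayedCopies E δ) :
    ∃ e' ∈ delayGraph E D δ, e'.NoSlowerThan e := by
  rcases Finset.mem_union.mp he with he | he
  · obtain ⟨heE, heD⟩ := Finset.mem_sdiff.mp he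
    exact ⟨e, Finset.mem_image.mpr ⟨e, heE, by simp [delayArc, heD]⟩, NoSlowerThan.refl e⟩
  · obtain ⟨a, ha, rfl⟩ := Finset.mem_image.mp he
    refine ⟨delayArc D δ a, Finset.mem_image_of_mem _ ha, ?_⟩
    by_cases hd : a ∈ D <;> simp [delayArc, hd, NoSlowerThan.refl, NoSlowerThan.mk]

theorem delayed_walk_iff_walk_in_starred_general {V : Type} [DecidableEq V]
    (E : Finset (TimeArc V)) (s z : V) (δ : ℕ)
    (D : Finset (TimeArc V)) :
    (∃ W : List (TimeArc V), IsTemporalWalk (delayGraph E D δ) s z W) ↔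
      (∃ W : List (TimeArc V),
        IsTemporalWalk ((E \ D) ∪ delayedCopies E δ) s z W) :=
  ⟨exists_temporalWalk_of_forall_exists_noSlowerThan fun e he =>
      ⟨e, delayGraph_subset_sdiff_union_delayedCopies E D δ he, NoSlowerThan.refl e⟩,
    exists_temporalWalk_of_forall_exists_noSlowerThan fun _ =>
      exists_noSlowerThan_mem_delayGraph⟩

/-- Let `G = (V,E)` be a temporal graph, `s, z ∈ V`, `δ ∈ ℕ`, `D ⊆ E`, let
`G* = (V, E ∪ E*)` with `E* = {(v,w,t,λ+δ) : (v,w,t,λ) ∈ E}` and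
`G*_D = (V, (E \ D) ∪ E*)`. Then there is a `D`-delayed temporal walk from `s` to
`z` in `G` if and only if there is a temporal walk from `s` to `z` in `G*_D`. -/
theorem delayed_walk_iff_walk_in_starred {V : Type} [DecidableEq V]
    (E : Finset (TimeArc V)) (s z : V) (δ : ℕ)
    (D : Finset (TimeArc V)) (hD : D ⊆ E) :
    (∃ W : List (TimeArc V), IsTemporalWalk (delayGraph E D δ) s z W) ↔
      (∃ W : List (TimeArc V),
        IsTemporalWalk ((E \ D) ∪ delayedCopies E δ) s z W) :=
  delayed_walk_iff_walk_in_starred_general E s z δ D
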